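/- Let s0 > 0. Then there exists a constant C (depending only on s0) such that for all s ≥ s0, ∫_{0}^{∞} (Φ'(z) - Φ'(z+s))² / ( (Φ(z+s) - Φ(z)) · (Φ(-z-s) + Φ(z)) ) dz ≤ C. -/

import Mathlib

/-!
For `z ≥ 0` and `s ≥ s0` the numerator is at most `Φ' z ^ 2`, the first factor of the denominator
is at least `s0 * Φ' (z + s0)` (the density decreases on `[z, z + s0]`) and the second at least
`Φ 0`. Completing the square, `Φ' z ^ 2 / Φ' (z + s0) = exp (s0 ^ 2) * Φ' (z - s0)`, so this
`s`-independent bound is integrable.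
-/

open MeasureTheory Real Set Filter

/-- The standard normal density `Φ'(z) = (1/√(2π)) e^{-z²/2}`. -/
noncomputable def Φ' (z : ℝ) : ℝ := (Real.sqrt (2 * Real.pi))⁻¹ * Real.exp (-z ^ 2 / 2)

/-- The standard normal cumulative distribution function `Φ`. -/
noncomputable def Φ (z : ℝ) : ℝ := ∫ u in Set.Iic z, Φ' u

open ProbabilityTheory

lemma Φ'_eq_gaussianPDFReal : Φ' = gaussianPDFReal 0 1 := by
  ext z
  simp [Φ', gaussianPDFReal]

lemma Φ'_pos (z : ℝ) : 0 < Φ' z := by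
  rw [Φ'_eq_gaussianPDFReal]
  exact gaussianPDFReal_pos _ _ _ one_ne_zero

lemma integrable_Φ' : Integrable Φ' := by
  rw [Φ'_eq_gaussianPDFReal]
  exact integrable_gaussianPDFReal _ _

lemma continuous_Φ' : Continuous Φ' := by
  unfold Φ'
  fun_prop

lemma Φ'_le_Φ' {a b : ℝ} (h : a ^ 2 ≤ b ^ 2) : Φ' b ≤ Φ' a := by
  unfold Φ'
  gcongr

lemma sq_Φ'_div_Φ'_add (z a : ℝ) : Φ' z ^ 2 / Φ' (z + a) = exp (a ^ 2) * Φ' (z - a) := by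
  rw [div_eq_iff (Φ'_pos _).ne']
  have hexp : exp (-z ^ 2 / 2) ^ 2 =
      exp (a ^ 2) * exp (-(z - a) ^ 2 / 2) * exp (-(z + a) ^ 2 / 2) := by
    rw [← exp_nat_mul, ← exp_add, ← exp_add]
    ring_nf
  rw [Φ', Φ', Φ', mul_pow, hexp]
  ring

lemma Φ_sub_Φ {a b : ℝ} (hab : a ≤ b) : Φ b - Φ a = ∫ u in Ioc a b, Φ' u := by
  rw [Φ, Φ, intervalIntegral.integral_Iic_sub_Iic integrable_Φ'.integrableOn
    integrable_Φ'.integrableOn, intervalIntegral.integral_of_le hab]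

lemma Φ_pos (z : ℝ) : 0 < Φ z := by
  rw [Φ, setIntegral_pos_iff_support_of_nonneg_ae (ae_of_all _ fun u => (Φ'_pos u).le)
    integrable_Φ'.integrableOn, Function.support_eq_univ fun u => (Φ'_pos u).ne', univ_inter]
  simp

lemma monotone_Φ : Monotone Φ := fun _ _ hab =>
  sub_nonneg.1 <| (Φ_sub_Φ hab).symm ▸
    setIntegral_nonneg measurableSet_Ioc fun u _ => (Φ'_pos u).le

lemma mul_Φ'_le_Φ_sub_Φ {a b : ℝ} (ha : 0 ≤ a) (hab : a ≤ b) :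
    (b - a) * Φ' b ≤ Φ b - Φ a := by
  rw [Φ_sub_Φ hab, ← Real.volume_real_Ioc_of_le hab, mul_comm]
  refine setIntegral_ge_of_const_le_real measurableSet_Ioc measure_Ioc_lt_top.ne
    (fun u hu => Φ'_le_Φ' ?_) integrable_Φ'.integrableOn
  nlinarith [hu.1, hu.2]

lemma integrable_sq_Φ'_div_Φ'_add (a : ℝ) : Integrable fun z => Φ' z ^ 2 / Φ' (z + a) := by
  simp_rw [sq_Φ'_div_Φ'_add]
  exact (integrable_Φ'.comp_sub_right a).const_mul _

lemma sq_Φ'_sub_div_le {z s a : ℝ} (hz : 0 ≤ z) (ha : 0 < a) (has : a ≤ s) :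
    (Φ' z - Φ' (z + s)) ^ 2 / ((Φ (z + s) - Φ z) * (Φ (-z - s) + Φ z)) ≤
      Φ' z ^ 2 / Φ' (z + a) / (a * Φ 0) := by
  have hnum : (Φ' z - Φ' (z + s)) ^ 2 ≤ Φ' z ^ 2 := by
    have := Φ'_le_Φ' (show z ^ 2 ≤ (z + s) ^ 2 by nlinarith)
    have := Φ'_pos (z + s)
    nlinarith
  have hinc : a * Φ' (z + a) ≤ Φ (z + s) - Φ z :=
    calc a * Φ' (z + a) = (z + a - z) * Φ' (z + a) := by ring
      _ ≤ Φ (z + a) - Φ z := mul_Φ'_le_Φ_sub_Φ hz (by linarith)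
      _ ≤ Φ (z + s) - Φ z := sub_le_sub_right (monotone_Φ (by linarith)) _
  have htail : Φ 0 ≤ Φ (-z - s) + Φ z := by
    have := monotone_Φ hz
    have := Φ_pos (-z - s)
    linarith
  rw [div_div, ← mul_assoc, mul_comm (Φ' (z + a))]
  have hpos : 0 < a * Φ' (z + a) := mul_pos ha (Φ'_pos _)
  have := Φ_pos 0
  gcongr
  exact hpos.le.trans hinc

/-- the integrals over `(0, ∞)` are uniformly bounded for `s ≥ s0 > 0`. -/
theorem uniform_bound_Ioi (s0 : ℝ) (hs0 : 0 < s0) :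
    ∃ C : ℝ, ∀ s : ℝ, s0 ≤ s →
      IntegrableOn (fun z : ℝ =>
        (Φ' z - Φ' (z + s)) ^ 2 / ((Φ (z + s) - Φ z) * (Φ (-z - s) + Φ z)))
        (Set.Ioi 0) volume ∧
      (∫ z in Set.Ioi (0:ℝ),
        (Φ' z - Φ' (z + s)) ^ 2 / ((Φ (z + s) - Φ z) * (Φ (-z - s) + Φ z))) ≤ C := by
  have hbound : IntegrableOn (fun z => Φ' z ^ 2 / Φ' (z + s0) / (s0 * Φ 0)) (Ioi 0) :=
    ((integrable_sq_Φ'_div_Φ'_add s0).div_const _).integrableOn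
  refine ⟨∫ z in Ioi 0, Φ' z ^ 2 / Φ' (z + s0) / (s0 * Φ 0), fun s hs => ?_⟩
  have hle : ∀ z ∈ Ioi (0 : ℝ),
      (Φ' z - Φ' (z + s)) ^ 2 / ((Φ (z + s) - Φ z) * (Φ (-z - s) + Φ z)) ≤
        Φ' z ^ 2 / Φ' (z + s0) / (s0 * Φ 0) :=
    fun z hz => sq_Φ'_sub_div_le (le_of_lt hz) hs0 hs
  have hmeas : Measurable fun z =>
      (Φ' z - Φ' (z + s)) ^ 2 / ((Φ (z + s) - Φ z) * (Φ (-z - s) + Φ z)) := by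
    have := continuous_Φ'.measurable
    have := monotone_Φ.measurable
    fun_prop
  have hint : IntegrableOn (fun z =>
      (Φ' z - Φ' (z + s)) ^ 2 / ((Φ (z + s) - Φ z) * (Φ (-z - s) + Φ z))) (Ioi 0) := by
    refine hbound.mono' hmeas.aestronglyMeasurable <| (ae_restrict_iff' measurableSet_Ioi).2 <|
      ae_of_all _ fun z hz => ?_
    have hs' : z ≤ z + s := by linarith [hz.out, hs0.trans_le hs]
    rw [Real.norm_eq_abs, abs_of_nonneg <| div_nonneg (sq_nonneg _) <|
      mul_nonneg (sub_nonneg.2 (monotone_Φ hs')) (add_pos (Φ_pos _) (Φ_pos _)).le]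
    exact hle z hz
  exact ⟨hint, setIntegral_mono_on hint hbound measurableSet_Ioi hle⟩
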